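/- arXiv:2411.15769 — 3 statements merged into one kernel-verified Lean document; each statement's English description precedes it below -/
import Mathlib

section
/- For every x ∈ ℝⁿ the maximizer y*(x) = argmax_{y ∈ ℝᵐ} f(x,y) exists and is unique, the map x ↦ y*(x) is κ-Lipschitz continuous with κ = ℓ/μ, and the gradient of P(x) = max_{y} f(x,y) satisfies ∇P(x) = ∇_x f(x, y*(x)) for all x. -/
/-!
Strong concavity of `g = f(x, ·)` gives the first-order inequality
`g b + μ/2 ‖b - a‖² ≤ g a + ⟪∇g a, b - a⟫`. At `a = 0` it makes `g` coercive, so a maximizer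
exists; adding it at `a = y₀` (a maximizer, `∇g y₀ = 0`) and at `a = y` gives
`μ ‖y₀ - y‖ ≤ ‖∇g y‖`. Taking `y = y*(x')`, where `∇_y f(x', ·)` vanishes, the `ℓ`-Lipschitz
gradient bounds the right side by `ℓ ‖x - x'‖`, whence `y*` is `ℓ/μ`-Lipschitz.

For Danskin's formula, `P(x')` is squeezed between `f(x', y*(x))` and `f(x', y*(x'))`. By the
quadratic Taylor bound for functions with Lipschitz gradient and the Lipschitz continuity of `y*`,
both lie within `O(‖x' - x‖²)` of `P(x) + ⟪∇ₓf(x, y*(x)), x' - x⟫`.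
-/

noncomputable section

open RealInnerProductSpace

/-- `ℝⁿ` as a Euclidean space. -/
abbrev En (n : ℕ) := EuclideanSpace ℝ (Fin n)

/-- The point `(x, y)` in the Euclidean (ℓ²) product `ℝⁿ × ℝᵐ`. -/
def pair {n m : ℕ} (x : En n) (y : En m) : WithLp 2 (En n × En m) :=
  (WithLp.equiv 2 (En n × En m)).symm (x, y)

/-- Partial gradient `∇ₓ f(x, y)` with respect to the first variable. -/
def gradx {n m : ℕ} (f : WithLp 2 (En n × En m) → ℝ) (x : En n) (y : En m) : En n :=
  gradient (fun x' => f (pair x' y)) x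

/-- Partial gradient `∇_y f(x, y)` with respect to the second variable. -/
def grady {n m : ℕ} (f : WithLp 2 (En n × En m) → ℝ) (x : En n) (y : En m) : En m :=
  gradient (fun y' => f (pair x y')) y

/-- Second-order partial derivative `∇²ₓₓ f(x, y)`. -/
def Hxx {n m : ℕ} (f : WithLp 2 (En n × En m) → ℝ) (x : En n) (y : En m) : En n →L[ℝ] En n :=
  fderiv ℝ (fun x' => gradx f x' y) x

/-- Second-order partial derivative `∇²ₓ_y f(x, y)`. -/
def Hxy {n m : ℕ} (f : WithLp 2 (En n × En m) → ℝ) (x : En n) (y : En m) : En m →L[ℝ] En n :=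
  fderiv ℝ (fun y' => gradx f x y') y

/-- Second-order partial derivative `∇²_yₓ f(x, y)`. -/
def Hyx {n m : ℕ} (f : WithLp 2 (En n × En m) → ℝ) (x : En n) (y : En m) : En n →L[ℝ] En m :=
  fderiv ℝ (fun x' => grady f x' y) x

/-- Second-order partial derivative `∇²_y_y f(x, y)`. -/
def Hyy {n m : ℕ} (f : WithLp 2 (En n × En m) → ℝ) (x : En n) (y : En m) : En m →L[ℝ] En m :=
  fderiv ℝ (fun y' => grady f x y') y

/-- `H(x,y) = ∇²ₓₓf(x,y) − ∇²ₓ_yf(x,y) (∇²_y_yf(x,y))⁻¹ ∇²_yₓf(x,y)`. -/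
def Hmat {n m : ℕ} (f : WithLp 2 (En n × En m) → ℝ) (x : En n) (y : En m) : En n →L[ℝ] En n :=
  Hxx f x y - (Hxy f x y).comp (((Hyy f x y).inverse).comp (Hyx f x y))

/-- `P(x) = max_y f(x, y)` (as a supremum over `y`). -/
def Pmax {n m : ℕ} (f : WithLp 2 (En n × En m) → ℝ) (x : En n) : ℝ := ⨆ y, f (pair x y)

/-- The Hessian of `P` at `x`, as the derivative of the gradient map. -/
def hessP {n : ℕ} (P : En n → ℝ) (x : En n) : En n →L[ℝ] En n := fderiv ℝ (gradient P) x

open Set Filter Topology Gradient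

section StrongConcavity

variable {E : Type*} [NormedAddCommGroup E] [InnerProductSpace ℝ E] [CompleteSpace E]
  {g : E → ℝ} {μ : ℝ}

theorem IsLocalMax.gradient_eq_zero {a : E} (h : IsLocalMax g a) : ∇ g a = 0 := by
  rw [gradient, h.fderiv_eq_zero, map_zero]

theorem StrongConcaveOn.add_mul_sq_le_add_inner_gradient (hc : StrongConcaveOn univ μ g)
    {a : E} (hg : DifferentiableAt ℝ g a) (b : E) :
    g b + μ / 2 * ‖b - a‖ ^ 2 ≤ g a + ⟪∇ g a, b - a⟫ := by
  set φ : ℝ → ℝ := fun t => g (a + t • (b - a))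
  have hφ : HasDerivAt φ ⟪∇ g a, b - a⟫ 0 := by
    have hline : HasDerivAt (fun t : ℝ => a + t • (b - a)) (b - a) 0 := by
      simpa using ((hasDerivAt_id (0 : ℝ)).smul_const (b - a)).const_add a
    rw [inner_gradient_left]
    exact hg.hasFDerivAt.comp_hasDerivAt_of_eq 0 hline (by simp)
  have hslope : ∀ t ∈ Ioc (0 : ℝ) 1,
      g b - g a + (1 - t) * (μ / 2 * ‖b - a‖ ^ 2) ≤ slope φ 0 t := by
    intro t ⟨ht₀, ht₁⟩
    have h := hc.2 (mem_univ b) (mem_univ a) ht₀.le (sub_nonneg.2 ht₁) (add_sub_cancel t 1)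
    rw [show t • b + (1 - t) • a = a + t • (b - a) by module] at h
    rw [slope_def_field, sub_zero, le_div_iff₀ ht₀]
    simp only [smul_eq_mul, φ, zero_smul, add_zero] at h ⊢
    linarith
  have hlim : Tendsto (fun t : ℝ => g b - g a + (1 - t) * (μ / 2 * ‖b - a‖ ^ 2))
      (𝓝[>] 0) (𝓝 (g b - g a + (1 - 0) * (μ / 2 * ‖b - a‖ ^ 2))) :=
    (Continuous.tendsto (by fun_prop) 0).mono_left nhdsWithin_le_nhds
  have := le_of_tendsto_of_tendsto hlim
    ((hasDerivAt_iff_tendsto_slope.1 hφ).mono_left (nhdsGT_le_nhdsNE 0))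
    (eventually_of_mem (Ioc_mem_nhdsGT one_pos) hslope)
  linarith

theorem StrongConcaveOn.mul_norm_sub_le_norm_gradient (hc : StrongConcaveOn univ μ g)
    (hg : Differentiable ℝ g) {y₀ : E} (hy₀ : ∀ y, g y ≤ g y₀) (y : E) :
    μ * ‖y₀ - y‖ ≤ ‖∇ g y‖ := by
  have hcrit : ∇ g y₀ = 0 := IsLocalMax.gradient_eq_zero (Eventually.of_forall hy₀)
  have h₀ := hc.add_mul_sq_le_add_inner_gradient (hg y₀) y
  have h₁ := hc.add_mul_sq_le_add_inner_gradient (hg y) y₀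
  rw [hcrit, inner_zero_left, add_zero, norm_sub_rev] at h₀
  have hsq : μ * ‖y₀ - y‖ ^ 2 ≤ ‖∇ g y‖ * ‖y₀ - y‖ := by
    linarith [real_inner_le_norm (∇ g y) (y₀ - y)]
  rcases (norm_nonneg (y₀ - y)).eq_or_lt with h | h
  · rw [← h, mul_zero]; exact norm_nonneg _
  · nlinarith

theorem StrongConcaveOn.exists_forall_ge [FiniteDimensional ℝ E] (hc : StrongConcaveOn univ μ g)
    (hμ : 0 < μ) (hg : Differentiable ℝ g) : ∃ y₀, ∀ y, g y ≤ g y₀ := by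
  refine hg.continuous.exists_forall_ge' 0 ?_
  -- `g` lies below a concave quadratic in `‖y‖`, so `g y ≤ g 0` once `‖y‖ ≥ 2 ‖∇ g 0‖ / μ`
  filter_upwards [tendsto_norm_cocompact_atTop.eventually_ge_atTop (2 * ‖∇ g 0‖ / μ)] with y hy
  have h := hc.add_mul_sq_le_add_inner_gradient (hg 0) y
  rw [sub_zero] at h
  rw [div_le_iff₀ hμ] at hy
  nlinarith [real_inner_le_norm (∇ g 0) y, norm_nonneg y]

theorem norm_maximizer_sub_le {X : Type*} [SeminormedAddCommGroup X] {g : X → E → ℝ}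
    {ystar : X → E} {ℓ : ℝ} (hμ : 0 < μ) (hc : ∀ x, StrongConcaveOn univ μ (g x))
    (hg : ∀ x, Differentiable ℝ (g x)) (hmax : ∀ x y, g x y ≤ g x (ystar x))
    (hlip : ∀ y x x', ‖∇ (g x) y - ∇ (g x') y‖ ≤ ℓ * ‖x - x'‖) (x x' : X) :
    ‖ystar x - ystar x'‖ ≤ ℓ / μ * ‖x - x'‖ := by
  have hcrit : ∇ (g x') (ystar x') = 0 :=
    IsLocalMax.gradient_eq_zero (Eventually.of_forall (hmax x'))
  have : μ * ‖ystar x - ystar x'‖ ≤ ℓ * ‖x - x'‖ :=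
    calc μ * ‖ystar x - ystar x'‖ ≤ ‖∇ (g x) (ystar x')‖ :=
          (hc x).mul_norm_sub_le_norm_gradient (hg x) (hmax x) (ystar x')
      _ = ‖∇ (g x) (ystar x') - ∇ (g x') (ystar x')‖ := by rw [hcrit, sub_zero]
      _ ≤ ℓ * ‖x - x'‖ := hlip _ _ _
  rw [div_mul_eq_mul_div, le_div_iff₀ hμ]
  linarith

end StrongConcavity

section LipschitzGradient

variable {E : Type*} [NormedAddCommGroup E] [InnerProductSpace ℝ E] [CompleteSpace E]

theorem abs_sub_sub_inner_gradient_le {φ : E → ℝ} {L : ℝ} (hL : 0 ≤ L) (hφ : Differentiable ℝ φ)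
    (hlip : ∀ a b, ‖∇ φ a - ∇ φ b‖ ≤ L * ‖a - b‖) (x y : E) :
    |φ y - φ x - ⟪∇ φ x, y - x⟫| ≤ L * ‖y - x‖ ^ 2 := by
  have hbound : ∀ z ∈ Metric.closedBall x ‖y - x‖,
      ‖fderiv ℝ φ z - InnerProductSpace.toDual ℝ E (∇ φ x)‖ ≤ L * ‖y - x‖ := by
    intro z hz
    rw [← toDual_gradient, ← map_sub, LinearIsometryEquiv.norm_map]
    exact (hlip z x).trans (by gcongr; rwa [← dist_eq_norm])
  have := (convex_closedBall x ‖y - x‖).norm_image_sub_le_of_norm_fderiv_le'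
    (fun z _ => hφ z) hbound (Metric.mem_closedBall_self (norm_nonneg _))
    (by rw [Metric.mem_closedBall, dist_eq_norm])
  rw [InnerProductSpace.toDual_apply_apply, Real.norm_eq_abs] at this
  linarith

theorem hasGradientAt_of_abs_sub_sub_inner_le {F : E → ℝ} {G x : E} {C : ℝ}
    (h : ∀ x', |F x' - F x - ⟪G, x' - x⟫| ≤ C * ‖x' - x‖ ^ 2) : HasGradientAt F G x := by
  rw [hasGradientAt_iff_isLittleO]
  have hO : (fun x' => F x' - F x - ⟪G, x' - x⟫) =O[𝓝 x] fun x' => ‖x' - x‖ ^ 2 :=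
    .of_bound C (.of_forall fun x' => by simpa using h x')
  exact hO.trans_isLittleO <| (Asymptotics.isLittleO_norm_pow_id one_lt_two).comp_tendsto
    (tendsto_sub_nhds_zero_iff.2 tendsto_id)

theorem hasGradientAt_comp_maximizer {Y : Type*} [SeminormedAddCommGroup Y] {g : E → Y → ℝ}
    {ystar : E → Y} {ℓ κ : ℝ} (hℓ : 0 ≤ ℓ) (hκ : 0 ≤ κ)
    (hmax : ∀ x y, g x y ≤ g x (ystar x))
    (hg : ∀ y, Differentiable ℝ (g · y))
    (hlip : ∀ y a b, ‖∇ (g · y) a - ∇ (g · y) b‖ ≤ ℓ * ‖a - b‖)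
    (hlip' : ∀ x y y', ‖∇ (g · y) x - ∇ (g · y') x‖ ≤ ℓ * ‖y - y'‖)
    (hystar : ∀ x x', ‖ystar x - ystar x'‖ ≤ κ * ‖x - x'‖) (x : E) :
    HasGradientAt (fun x => g x (ystar x)) (∇ (g · (ystar x)) x) x := by
  refine hasGradientAt_of_abs_sub_sub_inner_le (C := ℓ + ℓ * κ) fun x' => ?_
  have hlow := (abs_le.1 (abs_sub_sub_inner_gradient_le hℓ (hg (ystar x)) (hlip _) x x')).1
  have hup := (abs_le.1 (abs_sub_sub_inner_gradient_le hℓ (hg (ystar x')) (hlip _) x x')).2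
  have hshift : ⟪∇ (g · (ystar x')) x - ∇ (g · (ystar x)) x, x' - x⟫ ≤ ℓ * κ * ‖x' - x‖ ^ 2 :=
    calc _ ≤ ‖∇ (g · (ystar x')) x - ∇ (g · (ystar x)) x‖ * ‖x' - x‖ := real_inner_le_norm _ _
      _ ≤ ℓ * (κ * ‖x' - x‖) * ‖x' - x‖ := by
          gcongr; exact (hlip' _ _ _).trans (by gcongr; exact hystar x' x)
      _ = ℓ * κ * ‖x' - x‖ ^ 2 := by ring
  rw [inner_sub_left] at hshift
  have := hmax x' (ystar x)
  have := hmax x (ystar x')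
  rw [abs_le]
  constructor <;> nlinarith [mul_nonneg (mul_nonneg hℓ hκ) (sq_nonneg ‖x' - x‖)]

end LipschitzGradient

section L2Product

open WithLp

section Norm

variable {E F : Type*} [SeminormedAddCommGroup E] [SeminormedAddCommGroup F]

theorem norm_toLp_sub_toLp_left (x x' : E) (y : F) :
    ‖toLp 2 (x, y) - toLp 2 (x', y)‖ = ‖x - x'‖ := by
  rw [← toLp_sub, Prod.mk_sub_mk, sub_self, norm_toLp_fst]

theorem norm_toLp_sub_toLp_right (x : E) (y y' : F) :
    ‖toLp 2 (x, y) - toLp 2 (x, y')‖ = ‖y - y'‖ := by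
  rw [← toLp_sub, Prod.mk_sub_mk, sub_self, norm_toLp_snd]

theorem norm_fst_sub_fst_le (u v : WithLp 2 (E × F)) : ‖u.fst - v.fst‖ ≤ ‖u - v‖ := by
  simpa only [← dist_eq_norm] using dist_fst_le u v

theorem norm_snd_sub_snd_le (u v : WithLp 2 (E × F)) : ‖u.snd - v.snd‖ ≤ ‖u - v‖ := by
  simpa only [← dist_eq_norm] using dist_snd_le u v

end Norm

variable {E F : Type*} [NormedAddCommGroup E] [InnerProductSpace ℝ E] [CompleteSpace E]
  [NormedAddCommGroup F] [InnerProductSpace ℝ F] [CompleteSpace F] {f : WithLp 2 (E × F) → ℝ}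

theorem DifferentiableAt.hasGradientAt_toLp_left {x : E} {y : F}
    (hf : DifferentiableAt ℝ f (toLp 2 (x, y))) :
    HasGradientAt (fun x' => f (toLp 2 (x', y))) (∇ f (toLp 2 (x, y))).fst x := by
  have hpair := (prodContinuousLinearEquiv 2 ℝ E F).symm.hasFDerivAt.comp x
    (hasFDerivAt_prodMk_left (𝕜 := ℝ) x y)
  refine (hf.hasFDerivAt.comp x hpair).congr_fderiv ?_
  ext v
  simp only [ContinuousLinearMap.comp_apply, InnerProductSpace.toDual_apply_apply]
  rw [← inner_gradient_left, prod_inner_apply]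
  simp

theorem DifferentiableAt.hasGradientAt_toLp_right {x : E} {y : F}
    (hf : DifferentiableAt ℝ f (toLp 2 (x, y))) :
    HasGradientAt (fun y' => f (toLp 2 (x, y'))) (∇ f (toLp 2 (x, y))).snd y := by
  have hpair := (prodContinuousLinearEquiv 2 ℝ E F).symm.hasFDerivAt.comp y
    (hasFDerivAt_prodMk_right (𝕜 := ℝ) x y)
  refine (hf.hasFDerivAt.comp y hpair).congr_fderiv ?_
  ext v
  simp only [ContinuousLinearMap.comp_apply, InnerProductSpace.toDual_apply_apply]
  rw [← inner_gradient_left, prod_inner_apply]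
  simp

theorem norm_gradient_toLp_left_sub_le {ℓ : ℝ} (hf : Differentiable ℝ f)
    (hlip : ∀ p q, ‖∇ f p - ∇ f q‖ ≤ ℓ * ‖p - q‖) (x x' : E) (y y' : F) :
    ‖∇ (fun a => f (toLp 2 (a, y))) x - ∇ (fun a => f (toLp 2 (a, y'))) x'‖ ≤
      ℓ * ‖toLp 2 (x, y) - toLp 2 (x', y')‖ := by
  rw [(hf _).hasGradientAt_toLp_left.gradient, (hf _).hasGradientAt_toLp_left.gradient]
  exact (norm_fst_sub_fst_le _ _).trans (hlip _ _)

theorem norm_gradient_toLp_right_sub_le {ℓ : ℝ} (hf : Differentiable ℝ f)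
    (hlip : ∀ p q, ‖∇ f p - ∇ f q‖ ≤ ℓ * ‖p - q‖) (x x' : E) (y y' : F) :
    ‖∇ (fun b => f (toLp 2 (x, b))) y - ∇ (fun b => f (toLp 2 (x', b))) y'‖ ≤
      ℓ * ‖toLp 2 (x, y) - toLp 2 (x', y')‖ := by
  rw [(hf _).hasGradientAt_toLp_right.gradient, (hf _).hasGradientAt_toLp_right.gradient]
  exact (norm_snd_sub_snd_le _ _).trans (hlip _ _)

end L2Product

/-- Under twice continuous differentiability of `f`, `ℓ`-Lipschitz continuity
of its full gradient, and `μ`-strong concavity in `y` with `0 < μ ≤ ℓ`: for every `x` the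
maximizer `y*(x)` exists and is unique, `x ↦ y*(x)` is `κ = ℓ/μ`-Lipschitz, and
`∇P(x) = ∇ₓ f(x, y*(x))`. -/
theorem statement0 {n m : ℕ} (f : WithLp 2 (En n × En m) → ℝ) (ℓ μ : ℝ)
    (hμ : 0 < μ) (hμℓ : μ ≤ ℓ)
    (hf : ContDiff ℝ 2 f)
    (hlip : ∀ p q : WithLp 2 (En n × En m), ‖gradient f p - gradient f q‖ ≤ ℓ * ‖p - q‖)
    (hconc : ∀ x : En n, StrongConcaveOn Set.univ μ (fun y => f (pair x y))) :
    ∃ ystar : En n → En m,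
      (∀ x : En n, (∀ y, f (pair x y) ≤ f (pair x (ystar x))) ∧
        (∀ y, (∀ y', f (pair x y') ≤ f (pair x y)) → y = ystar x)) ∧
      (∀ x x' : En n, ‖ystar x - ystar x'‖ ≤ ℓ / μ * ‖x - x'‖) ∧
      (∀ x : En n, gradient (Pmax f) x = gradx f x (ystar x)) := by
  have hℓ : 0 ≤ ℓ := hμ.le.trans hμℓ
  have hfd : Differentiable ℝ f := hf.differentiable two_ne_zero
  have hdx (y : En m) : Differentiable ℝ fun x => f (pair x y) := fun _ =>
    (hfd _).hasGradientAt_toLp_left.differentiableAt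
  have hdy (x : En n) : Differentiable ℝ fun y => f (pair x y) := fun _ =>
    (hfd _).hasGradientAt_toLp_right.differentiableAt
  have hlipx (y : En m) (a b : En n) : ‖gradx f a y - gradx f b y‖ ≤ ℓ * ‖a - b‖ :=
    (norm_gradient_toLp_left_sub_le hfd hlip a b y y).trans_eq (by rw [norm_toLp_sub_toLp_left])
  have hlipxy (x : En n) (a b : En m) : ‖gradx f x a - gradx f x b‖ ≤ ℓ * ‖a - b‖ :=
    (norm_gradient_toLp_left_sub_le hfd hlip x x a b).trans_eq (by rw [norm_toLp_sub_toLp_right])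
  have hlipyx (y : En m) (a b : En n) : ‖grady f a y - grady f b y‖ ≤ ℓ * ‖a - b‖ :=
    (norm_gradient_toLp_right_sub_le hfd hlip a b y y).trans_eq (by rw [norm_toLp_sub_toLp_left])
  choose ystar hmax using fun x => (hconc x).exists_forall_ge hμ (hdy x)
  have hystar := norm_maximizer_sub_le hμ hconc hdy hmax hlipyx
  have hP : Pmax f = fun x => f (pair x (ystar x)) := funext fun x =>
    le_antisymm (ciSup_le (hmax x)) (le_ciSup ⟨_, forall_mem_range.2 (hmax x)⟩ _)
  refine ⟨ystar, fun x => ⟨hmax x, fun y hy => ?_⟩, hystar, fun x => ?_⟩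
  · exact ((hconc x).strictConcaveOn hμ).eq_of_isMaxOn (fun y' _ => hy y') (fun y' _ => hmax x y')
      (mem_univ _) (mem_univ _)
  · rw [hP]
    exact (hasGradientAt_comp_maximizer hℓ (by positivity) hmax hdx hlipx hlipxy hystar x).gradient
end
end

section
/- The map (x,y) ↦ H(x,y) := ∇²_{xx}f(x,y) − ∇²_{xy}f(x,y)(∇²_{yy}f(x,y))⁻¹∇²_{yx}f(x,y) is Lipschitz continuous in the operator norm with constant L_H = ρ(1+κ)², and moreover ‖H(x,y)‖ ≤ (1+κ)ℓ for all (x,y), where κ = ℓ/μ. -/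
noncomputable section

open RealInnerProductSpace

/-!
Each partial Hessian is the derivative of a partial gradient, and the partial gradients are the
components of the `ℓ`-Lipschitz map `∇f`, so all blocks have operator norm at most `ℓ`. Strong
concavity in `y` gives `⟪∇²_yy f u, u⟫ ≤ -μ‖u‖²`, hence `∇²_yy f` is invertible with
`‖(∇²_yy f)⁻¹‖ ≤ 1/μ`. Both claims are then perturbation bounds for the Schur complement
`A - B D⁻¹ C`: writing `D⁻¹ - D'⁻¹ = D⁻¹ (D' - D) D'⁻¹` and telescoping the triple product, the
four `ρ`-Lipschitz blocks contribute `ρ`, `ρκ`, `ρκ²` and `ρκ`, which sum to `ρ (1 + κ)²`.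
-/

open Set

section OperatorBounds

variable {E F G H : Type*} [NormedAddCommGroup E] [NormedSpace ℝ E] [NormedAddCommGroup F]
  [NormedSpace ℝ F] [NormedAddCommGroup G] [NormedSpace ℝ G] [NormedAddCommGroup H]
  [NormedSpace ℝ H]

namespace ContinuousLinearMap

theorem opNorm_comp_comp_le (B : G →L[ℝ] H) (T : F →L[ℝ] G) (C : E →L[ℝ] F) :
    ‖B.comp (T.comp C)‖ ≤ ‖B‖ * ‖T‖ * ‖C‖ :=
  (B.opNorm_comp_le _).trans <| by
    rw [mul_assoc]; exact mul_le_mul_of_nonneg_left (T.opNorm_comp_le C) (norm_nonneg B)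

theorem norm_comp_comp_sub_comp_comp_le (B B' : G →L[ℝ] H) (T T' : F →L[ℝ] G)
    (C C' : E →L[ℝ] F) :
    ‖B.comp (T.comp C) - B'.comp (T'.comp C')‖ ≤
      ‖B - B'‖ * ‖T‖ * ‖C‖ + ‖B'‖ * ‖T - T'‖ * ‖C‖ + ‖B'‖ * ‖T'‖ * ‖C - C'‖ := by
  have split : B.comp (T.comp C) - B'.comp (T'.comp C') =
      (B - B').comp (T.comp C) + B'.comp ((T - T').comp C) + B'.comp (T'.comp (C - C')) := by
    simp only [sub_comp, comp_sub]
    abel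
  rw [split]
  exact (norm_add₃_le ..).trans <|
    add_le_add (add_le_add (opNorm_comp_comp_le ..) (opNorm_comp_comp_le ..))
      (opNorm_comp_comp_le ..)

theorem norm_inverse_sub_inverse_le {T T' : E →L[ℝ] E} (hT : IsUnit T) (hT' : IsUnit T') :
    ‖T.inverse - T'.inverse‖ ≤ ‖T.inverse‖ * ‖T' - T‖ * ‖T'.inverse‖ := by
  rw [← ringInverse_eq_inverse, Ring.inverse_sub_inverse (iff_of_true hT hT')]
  exact norm_mul₃_le

def schurComplement (A : E →L[ℝ] E) (B : F →L[ℝ] E) (C : E →L[ℝ] F) (D : F →L[ℝ] F) :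
    E →L[ℝ] E :=
  A - B.comp (D.inverse.comp C)

variable {ℓ μ : ℝ} {A : E →L[ℝ] E} {B : F →L[ℝ] E} {C : E →L[ℝ] F} {D : F →L[ℝ] F}

theorem norm_schurComplement_le (hℓ : 0 ≤ ℓ) (hμ : 0 < μ) (hA : ‖A‖ ≤ ℓ)
    (hB : ‖B‖ ≤ ℓ) (hC : ‖C‖ ≤ ℓ) (hD : ‖D.inverse‖ ≤ μ⁻¹) :
    ‖schurComplement A B C D‖ ≤ (1 + ℓ / μ) * ℓ := calc
  _ ≤ ‖A‖ + ‖B‖ * ‖D.inverse‖ * ‖C‖ := (norm_sub_le _ _).trans (by grw [opNorm_comp_comp_le])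
  _ ≤ ℓ + ℓ * μ⁻¹ * ℓ := by gcongr
  _ = (1 + ℓ / μ) * ℓ := by field_simp

theorem norm_schurComplement_sub_schurComplement_le {A' : E →L[ℝ] E} {B' : F →L[ℝ] E}
    {C' : E →L[ℝ] F} {D' : F →L[ℝ] F} {δ : ℝ} (hℓ : 0 ≤ ℓ) (hμ : 0 < μ)
    (hD : IsUnit D) (hD' : IsUnit D') (hDinv : ‖D.inverse‖ ≤ μ⁻¹) (hDinv' : ‖D'.inverse‖ ≤ μ⁻¹)
    (hB' : ‖B'‖ ≤ ℓ) (hC : ‖C‖ ≤ ℓ) (hA : ‖A - A'‖ ≤ δ) (hBB' : ‖B - B'‖ ≤ δ)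
    (hCC' : ‖C - C'‖ ≤ δ) (hDD' : ‖D - D'‖ ≤ δ) :
    ‖schurComplement A B C D - schurComplement A' B' C' D'‖ ≤ (1 + ℓ / μ) ^ 2 * δ := by
  have hδ : 0 ≤ δ := (norm_nonneg _).trans hA
  have hinv : ‖D.inverse - D'.inverse‖ ≤ μ⁻¹ * δ * μ⁻¹ := by
    grw [norm_inverse_sub_inverse_le hD hD', norm_sub_rev, hDinv, hDinv', hDD']
  calc _ = ‖(A - A') - (B.comp (D.inverse.comp C) - B'.comp (D'.inverse.comp C'))‖ := by
        rw [schurComplement, schurComplement, sub_sub_sub_comm]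
    _ ≤ δ + (δ * μ⁻¹ * ℓ + ℓ * (μ⁻¹ * δ * μ⁻¹) * ℓ + ℓ * μ⁻¹ * δ) := by
        grw [norm_sub_le, norm_comp_comp_sub_comp_comp_le, hA, hBB', hinv, hDinv, hDinv', hB', hC,
          hCC']
    _ = (1 + ℓ / μ) ^ 2 * δ := by field_simp; ring

end ContinuousLinearMap

end OperatorBounds

section Coercive

variable {E : Type*} [NormedAddCommGroup E] [InnerProductSpace ℝ E] {T : E →L[ℝ] E} {μ : ℝ}

theorem ContinuousLinearMap.mul_norm_le_norm_apply_of_inner_le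
    (hT : ∀ u, ⟪T u, u⟫ ≤ -μ * ‖u‖ ^ 2) (u : E) : μ * ‖u‖ ≤ ‖T u‖ := by
  have key : μ * ‖u‖ * ‖u‖ ≤ ‖T u‖ * ‖u‖ := calc
    μ * ‖u‖ * ‖u‖ ≤ -⟪T u, u⟫ := by linarith [hT u]
    _ ≤ ‖T u‖ * ‖u‖ := (neg_le_abs _).trans (abs_real_inner_le_norm _ _)
  rcases (norm_nonneg u).eq_or_lt with hu | hu
  · rw [← hu, mul_zero]; exact norm_nonneg _
  · exact le_of_mul_le_mul_right key hu

theorem ContinuousLinearMap.isUnit_of_mul_norm_le [FiniteDimensional ℝ E] (hμ : 0 < μ)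
    (hT : ∀ u, μ * ‖u‖ ≤ ‖T u‖) : IsUnit T := by
  have hinj : Function.Injective T := by
    refine (injective_iff_map_eq_zero T).2 fun u hu => norm_le_zero_iff.1 ?_
    have := hT u
    rw [hu, norm_zero] at this
    nlinarith [norm_nonneg u]
  exact T.isUnit_iff_bijective.2
    ⟨hinj, LinearMap.injective_iff_surjective (f := (T : E →ₗ[ℝ] E)).1 hinj⟩

theorem ContinuousLinearMap.norm_inverse_le_of_mul_norm_le (hT : IsUnit T) (hμ : 0 < μ)
    (hbound : ∀ u, μ * ‖u‖ ≤ ‖T u‖) : ‖T.inverse‖ ≤ μ⁻¹ := by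
  refine T.inverse.opNorm_le_bound (inv_nonneg.2 hμ.le) fun w => ?_
  have hw : T (T.inverse w) = w := by
    rw [← ContinuousLinearMap.ringInverse_eq_inverse, ← mul_apply_eq_comp,
      Ring.mul_inverse_cancel T hT, one_apply_eq_self]
  rw [inv_mul_eq_div, le_div_iff₀ hμ, mul_comm]
  simpa [hw] using hbound (T.inverse w)

end Coercive

section Gradients

variable {E : Type*} [NormedAddCommGroup E] [InnerProductSpace ℝ E] {μ : ℝ}

theorem ContDiff.differentiable_gradient [CompleteSpace E] {g : E → ℝ} (hg : ContDiff ℝ 2 g) :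
    Differentiable ℝ (gradient g) :=
  (InnerProductSpace.toDual ℝ E).symm.toContinuousLinearEquiv.differentiable.comp
    ((hg.fderiv_right (m := 1) (by norm_num)).differentiable one_ne_zero)

theorem hasDerivAt_add_smul (y u : E) (t : ℝ) : HasDerivAt (fun s : ℝ => y + s • u) u t := by
  simpa using ((hasDerivAt_id t).smul_const u).const_add y

theorem DifferentiableAt.hasDerivAt_comp_add_smul [CompleteSpace E] {φ : E → ℝ} {y u : E} {t : ℝ}
    (hφ : DifferentiableAt ℝ φ (y + t • u)) :
    HasDerivAt (fun s : ℝ => φ (y + s • u)) ⟪gradient φ (y + t • u), u⟫ t := by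
  rw [gradient, InnerProductSpace.toDual_symm_apply]
  exact hφ.hasFDerivAt.comp_hasDerivAt t (hasDerivAt_add_smul y u t)

theorem StrongConcaveOn.inner_apply_le_of_hasFDerivAt_gradient [CompleteSpace E] {φ : E → ℝ}
    (hφ : StrongConcaveOn univ μ φ) (hd : Differentiable ℝ φ) {y : E} {B : E →L[ℝ] E}
    (hB : HasFDerivAt (gradient φ) B y) (u : E) : ⟪B u, u⟫ ≤ -μ * ‖u‖ ^ 2 := by
  set d : ℝ → ℝ := fun t => ⟪gradient φ (y + t • u), u⟫ + μ * ⟪y + t • u, u⟫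
  -- `d` is the derivative of the concave `t ↦ φ (y + t u) + μ/2 ‖y + t u‖²`, hence antitone
  have hconc : ConcaveOn ℝ univ fun t : ℝ => φ (y + t • u) + μ / 2 * ‖y + t • u‖ ^ 2 := by
    have hline : (fun t : ℝ => φ (y + t • u) + μ / 2 * ‖y + t • u‖ ^ 2) =
        (fun x => φ x + μ / 2 * ‖x‖ ^ 2) ∘ AffineMap.lineMap y (y + u) := by
      funext t
      simp only [Function.comp_apply, AffineMap.lineMap_apply_module', add_sub_cancel_left]
      rw [add_comm (t • u)]
    rw [hline, ← preimage_univ]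
    exact (strongConcaveOn_iff_convex.1 hφ).comp_affineMap _
  have hderiv : ∀ t, HasDerivAt (fun t : ℝ => φ (y + t • u) + μ / 2 * ‖y + t • u‖ ^ 2) (d t) t :=
    fun t => (((hd _).hasDerivAt_comp_add_smul).add
      (((hasDerivAt_add_smul y u t).norm_sq).const_mul (μ / 2))).congr_deriv (by ring)
  have hanti : Antitone d := by
    have := hconc.antitoneOn_deriv fun t _ => (hderiv t).differentiableAt
    rwa [funext fun t => (hderiv t).deriv, antitoneOn_univ] at this
  have hd0 : HasDerivAt d (⟪B u, u⟫ + μ * ‖u‖ ^ 2) 0 := by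
    have hB0 : HasFDerivAt (gradient φ) B (y + (0 : ℝ) • u) := by simpa using hB
    refine (((hB0.comp_hasDerivAt 0 (hasDerivAt_add_smul y u 0)).inner ℝ
      (hasDerivAt_const 0 u)).add
      (((hasDerivAt_add_smul y u 0).inner ℝ (hasDerivAt_const 0 u)).const_mul μ)).congr_deriv ?_
    simp
  linarith [hd0.nonpos_of_antitone hanti]

end Gradients

section PartialDerivatives

variable {n m : ℕ} {f : WithLp 2 (En n × En m) → ℝ}

theorem norm_pair_sub_pair_left (x x' : En n) (y : En m) :
    ‖pair x y - pair x' y‖ = ‖x - x'‖ := by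
  simp [pair, ← WithLp.toLp_sub]

theorem norm_pair_sub_pair_right (x : En n) (y y' : En m) :
    ‖pair x y - pair x y'‖ = ‖y - y'‖ := by
  simp [pair, ← WithLp.toLp_sub]

theorem hasFDerivAt_pair_left (x : En n) (y : En m) :
    HasFDerivAt (fun x' => pair x' y)
      ((WithLp.prodContinuousLinearEquiv 2 ℝ (En n) (En m)).symm.toContinuousLinearMap.comp
        (ContinuousLinearMap.inl ℝ (En n) (En m))) x :=
  (WithLp.prodContinuousLinearEquiv 2 ℝ (En n) (En m)).symm.hasFDerivAt.comp x
    (hasFDerivAt_prodMk_left x y)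

theorem hasFDerivAt_pair_right (x : En n) (y : En m) :
    HasFDerivAt (fun y' => pair x y')
      ((WithLp.prodContinuousLinearEquiv 2 ℝ (En n) (En m)).symm.toContinuousLinearMap.comp
        (ContinuousLinearMap.inr ℝ (En n) (En m))) y :=
  (WithLp.prodContinuousLinearEquiv 2 ℝ (En n) (En m)).symm.hasFDerivAt.comp y
    (hasFDerivAt_prodMk_right x y)

theorem gradx_eq_fst {x : En n} {y : En m} (hf : DifferentiableAt ℝ f (pair x y)) :
    gradx f x y = (gradient f (pair x y)).fst := by
  refine HasGradientAt.gradient (hasGradientAt_iff_hasFDerivAt.2 ?_)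
  refine (hf.hasFDerivAt.comp x (hasFDerivAt_pair_left x y)).congr_fderiv ?_
  ext v
  show fderiv ℝ f (pair x y) _ = ⟪_, v⟫
  rw [← InnerProductSpace.toDual_symm_apply, WithLp.prod_inner_apply]
  simp [gradient]

theorem grady_eq_snd {x : En n} {y : En m} (hf : DifferentiableAt ℝ f (pair x y)) :
    grady f x y = (gradient f (pair x y)).snd := by
  refine HasGradientAt.gradient (hasGradientAt_iff_hasFDerivAt.2 ?_)
  refine (hf.hasFDerivAt.comp y (hasFDerivAt_pair_right x y)).congr_fderiv ?_
  ext v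
  show fderiv ℝ f (pair x y) _ = ⟪_, v⟫
  rw [← InnerProductSpace.toDual_symm_apply, WithLp.prod_inner_apply]
  simp [gradient]

theorem hasFDerivAt_grady (hf : ContDiff ℝ 2 f) (x : En n) (y : En m) :
    HasFDerivAt (fun y' => grady f x y') (Hyy f x y) y := by
  refine DifferentiableAt.hasFDerivAt ?_
  have hgrady : (fun y' => grady f x y') = fun y' => (gradient f (pair x y')).snd :=
    funext fun y' => grady_eq_snd ((hf.differentiable (by norm_num)) _)
  rw [hgrady]
  exact (WithLp.sndL 2 ℝ (En n) (En m)).differentiableAt.comp y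
    ((hf.differentiable_gradient _).comp y (hasFDerivAt_pair_right x y).differentiableAt)

variable {ℓ : ℝ}

theorem norm_gradx_sub_gradx_le (hf : Differentiable ℝ f)
    (hlip : ∀ p q, ‖gradient f p - gradient f q‖ ≤ ℓ * ‖p - q‖) (x x' : En n) (y y' : En m) :
    ‖gradx f x y - gradx f x' y'‖ ≤ ℓ * ‖pair x y - pair x' y'‖ := by
  rw [gradx_eq_fst (hf _), gradx_eq_fst (hf _), ← WithLp.sub_fst]
  exact (WithLp.norm_fst_le _ _).trans (hlip _ _)

theorem norm_grady_sub_grady_le (hf : Differentiable ℝ f)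
    (hlip : ∀ p q, ‖gradient f p - gradient f q‖ ≤ ℓ * ‖p - q‖) (x x' : En n) (y y' : En m) :
    ‖grady f x y - grady f x' y'‖ ≤ ℓ * ‖pair x y - pair x' y'‖ := by
  rw [grady_eq_snd (hf _), grady_eq_snd (hf _), ← WithLp.sub_snd]
  exact (WithLp.norm_snd_le _ _).trans (hlip _ _)

theorem norm_Hxx_le (hf : Differentiable ℝ f) (hℓ : 0 ≤ ℓ)
    (hlip : ∀ p q, ‖gradient f p - gradient f q‖ ≤ ℓ * ‖p - q‖) (x : En n) (y : En m) :
    ‖Hxx f x y‖ ≤ ℓ :=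
  norm_fderiv_le_of_lip' ℝ hℓ <| .of_forall fun x' => by
    simpa only [norm_pair_sub_pair_left] using norm_gradx_sub_gradx_le hf hlip x' x y y

theorem norm_Hxy_le (hf : Differentiable ℝ f) (hℓ : 0 ≤ ℓ)
    (hlip : ∀ p q, ‖gradient f p - gradient f q‖ ≤ ℓ * ‖p - q‖) (x : En n) (y : En m) :
    ‖Hxy f x y‖ ≤ ℓ :=
  norm_fderiv_le_of_lip' ℝ hℓ <| .of_forall fun y' => by
    simpa only [norm_pair_sub_pair_right] using norm_gradx_sub_gradx_le hf hlip x x y' y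

theorem norm_Hyx_le (hf : Differentiable ℝ f) (hℓ : 0 ≤ ℓ)
    (hlip : ∀ p q, ‖gradient f p - gradient f q‖ ≤ ℓ * ‖p - q‖) (x : En n) (y : En m) :
    ‖Hyx f x y‖ ≤ ℓ :=
  norm_fderiv_le_of_lip' ℝ hℓ <| .of_forall fun x' => by
    simpa only [norm_pair_sub_pair_left] using norm_grady_sub_grady_le hf hlip x' x y y

theorem mul_norm_le_norm_Hyy_apply (hf : ContDiff ℝ 2 f) {x : En n} {μ : ℝ}
    (hconc : StrongConcaveOn univ μ (fun y => f (pair x y))) (y u : En m) :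
    μ * ‖u‖ ≤ ‖Hyy f x y u‖ :=
  ContinuousLinearMap.mul_norm_le_norm_apply_of_inner_le
    (hconc.inner_apply_le_of_hasFDerivAt_gradient
      (fun y' => (hf.differentiable (by norm_num) _).comp y'
        (hasFDerivAt_pair_right x y').differentiableAt)
      (hasFDerivAt_grady hf x y)) u

end PartialDerivatives

/-- The map `(x,y) ↦ H(x,y) = ∇²ₓₓf − ∇²ₓ_yf (∇²_y_yf)⁻¹ ∇²_yₓf` is Lipschitz
continuous in operator norm with constant `L_H = ρ(1+κ)²`, and `‖H(x,y)‖ ≤ (1+κ)ℓ` for all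
`(x,y)`, where `κ = ℓ/μ`. -/
theorem statement2 {n m : ℕ} (f : WithLp 2 (En n × En m) → ℝ) (ℓ μ ρ : ℝ)
    (hμ : 0 < μ) (hμℓ : μ ≤ ℓ)
    (hf : ContDiff ℝ 2 f)
    (hlip : ∀ p q : WithLp 2 (En n × En m), ‖gradient f p - gradient f q‖ ≤ ℓ * ‖p - q‖)
    (hxx : ∀ (x x' : En n) (y y' : En m),
      ‖Hxx f x y - Hxx f x' y'‖ ≤ ρ * ‖pair x y - pair x' y'‖)
    (hxy : ∀ (x x' : En n) (y y' : En m),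
      ‖Hxy f x y - Hxy f x' y'‖ ≤ ρ * ‖pair x y - pair x' y'‖)
    (hyx : ∀ (x x' : En n) (y y' : En m),
      ‖Hyx f x y - Hyx f x' y'‖ ≤ ρ * ‖pair x y - pair x' y'‖)
    (hyy : ∀ (x x' : En n) (y y' : En m),
      ‖Hyy f x y - Hyy f x' y'‖ ≤ ρ * ‖pair x y - pair x' y'‖)
    (hconc : ∀ x : En n, StrongConcaveOn Set.univ μ (fun y => f (pair x y))) :
    (∀ (x x' : En n) (y y' : En m),
      ‖Hmat f x y - Hmat f x' y'‖ ≤ ρ * (1 + ℓ / μ) ^ 2 * ‖pair x y - pair x' y'‖) ∧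
    (∀ (x : En n) (y : En m), ‖Hmat f x y‖ ≤ (1 + ℓ / μ) * ℓ) := by
  have hℓ : 0 ≤ ℓ := hμ.le.trans hμℓ
  have hdiff : Differentiable ℝ f := hf.differentiable (by norm_num)
  have hunit : ∀ x y, IsUnit (Hyy f x y) := fun x y =>
    ContinuousLinearMap.isUnit_of_mul_norm_le hμ (mul_norm_le_norm_Hyy_apply hf (hconc x) y)
  have hinv : ∀ x y, ‖(Hyy f x y).inverse‖ ≤ μ⁻¹ := fun x y =>
    ContinuousLinearMap.norm_inverse_le_of_mul_norm_le (hunit x y) hμ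
      (mul_norm_le_norm_Hyy_apply hf (hconc x) y)
  refine ⟨fun x x' y y' => ?_, fun x y => ?_⟩
  · refine (ContinuousLinearMap.norm_schurComplement_sub_schurComplement_le hℓ hμ (hunit x y)
      (hunit x' y') (hinv x y) (hinv x' y') (norm_Hxy_le hdiff hℓ hlip x' y')
      (norm_Hyx_le hdiff hℓ hlip x y) (hxx x x' y y') (hxy x x' y y') (hyx x x' y y')
      (hyy x x' y y')).trans_eq (by ring)
  · exact ContinuousLinearMap.norm_schurComplement_le hℓ hμ (norm_Hxx_le hdiff hℓ hlip x y)
      (norm_Hxy_le hdiff hℓ hlip x y) (norm_Hyx_le hdiff hℓ hlip x y) (hinv x y)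
end
end

section
/- A vector s ∈ ℝⁿ is a global minimizer of the trust-region subproblem min_{‖s‖ ≤ R} gᵀs + ½ sᵀ(H + σ‖g‖^{1/2} I)s if and only if there exists a dual multiplier λ ≥ 0 such that: (i) ‖s‖ ≤ R; (ii) λ(‖s‖ − R) = 0; (iii) (H + σ‖g‖^{1/2} I + λ I)s = −g; and (iv) the operator H + σ‖g‖^{1/2} I + λ I is positive semidefinite. -/
noncomputable section

open RealInnerProductSpace

/-!
The model `q x = ⟪g, x⟫ + ½⟪A x, x⟫` is quadratic, so whenever `B = A + λ I` satisfies `B s = -g`,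
`q w - q s = ½⟪B (w - s), w - s⟫ - λ/2 (‖w‖² - ‖s‖²)` exactly. With complementarity and `B ⪰ 0`
this gives sufficiency. Conversely, minimality over the convex ball gives the variational inequality
`⟪g + A s, w - s⟫ ≥ 0`, whose solutions are exactly `g + A s = -λ s` with `λ ≥ 0` and
`λ (‖s‖ - R) = 0` (test `w` opposite to `g + A s` and use the equality case of Cauchy–Schwarz).
The identity then makes `⟪B (w - s), w - s⟫ ≥ 0` for `w` near `s` if `s` is interior, and for `w`
on the sphere `‖w‖ = ‖s‖` if `s` is on the boundary. Differences `w - s` with `‖w‖ = ‖s‖` are the nonzero multiples of all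
directions `u` with `⟪s, u⟫ ≠ 0` (reflect `s` in `u⊥`), and continuity gives the remaining ones.
-/

open Filter Topology Metric Set

namespace TrustRegion

variable {E : Type*} [NormedAddCommGroup E] [InnerProductSpace ℝ E]

def quadraticModel (A : E →L[ℝ] E) (g x : E) : ℝ := ⟪g, x⟫ + 1 / 2 * ⟪A x, x⟫

variable {A : E →L[ℝ] E} {g : E}

theorem quadraticModel_sub (hA : (A : E →ₗ[ℝ] E).IsSymmetric) (x y : E) :
    quadraticModel A g y - quadraticModel A g x =
      ⟪g + A x, y - x⟫ + 1 / 2 * ⟪A (y - x), y - x⟫ := by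
  have hsymm : ⟪A (y - x), x⟫ = ⟪A x, y - x⟫ := (hA _ _).trans (real_inner_comm _ _)
  have hy : y = x + (y - x) := (add_sub_cancel x y).symm
  simp only [quadraticModel]
  rw [hy, map_add]
  simp only [inner_add_left, inner_add_right, add_sub_cancel_left, hsymm]
  ring

theorem quadraticModel_sub_of_shifted_stationary (hA : (A : E →ₗ[ℝ] E).IsSymmetric) {lam : ℝ}
    {s : E} (hs : (A + lam • 1) s = -g) (w : E) :
    quadraticModel A g w - quadraticModel A g s =
      1 / 2 * ⟪(A + lam • 1) (w - s), w - s⟫ - lam / 2 * (‖w‖ ^ 2 - ‖s‖ ^ 2) := by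
  have hgrad : g + A s = -(lam • s) := by
    have h : A s + lam • s = -g := by simpa using hs
    linear_combination (norm := module) h
  rw [quadraticModel_sub hA, hgrad]
  simp only [add_apply, smul_apply, one_apply_eq_self, inner_add_left, inner_neg_left,
    real_inner_smul_left, real_inner_self_eq_norm_sq]
  rw [← sub_add_cancel w s, norm_add_sq_real, add_sub_cancel_right, real_inner_comm s]
  ring

theorem inner_gradient_nonneg_of_isMinOn (hA : (A : E →ₗ[ℝ] E).IsSymmetric) {K : Set E}
    (hK : Convex ℝ K) {s w : E} (hs : s ∈ K) (hw : w ∈ K)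
    (hmin : IsMinOn (quadraticModel A g) K s) : 0 ≤ ⟪g + A s, w - s⟫ := by
  set v := w - s
  have hslope : ∀ t ∈ Ioc (0 : ℝ) 1, 0 ≤ ⟪g + A s, v⟫ + t * (1 / 2 * ⟪A v, v⟫) := by
    rintro t ⟨ht0, ht1⟩
    have hmem : s + t • v ∈ K := hK.add_smul_sub_mem hs hw ⟨ht0.le, ht1⟩
    have hdiff := quadraticModel_sub hA (g := g) s (s + t • v)
    rw [add_sub_cancel_left, map_smul, inner_smul_right, real_inner_smul_left,
      real_inner_smul_right] at hdiff
    have hle : 0 ≤ t * (⟪g + A s, v⟫ + t * (1 / 2 * ⟪A v, v⟫)) := by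
      nlinarith [isMinOn_iff.1 hmin _ hmem]
    exact nonneg_of_mul_nonneg_right hle ht0
  have hlim : Tendsto (fun t : ℝ => ⟪g + A s, v⟫ + t * (1 / 2 * ⟪A v, v⟫)) (𝓝[>] 0)
      (𝓝 ⟪g + A s, v⟫) :=
    ((by fun_prop : Continuous fun t : ℝ => ⟪g + A s, v⟫ + t * (1 / 2 * ⟪A v, v⟫)).tendsto' 0 _
      (by simp)).mono_left nhdsWithin_le_nhds
  exact ge_of_tendsto hlim (eventually_of_mem (Ioc_mem_nhdsGT one_pos) hslope)

theorem exists_eq_neg_smul_of_forall_inner_sub_nonneg {R : ℝ} (hR : 0 < R) {r s : E}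
    (hs : ‖s‖ ≤ R) (h : ∀ w : E, ‖w‖ ≤ R → 0 ≤ ⟪r, w - s⟫) :
    ∃ lam : ℝ, 0 ≤ lam ∧ lam * (‖s‖ - R) = 0 ∧ r = -(lam • s) := by
  rcases eq_or_ne r 0 with rfl | hr
  · exact ⟨0, le_rfl, zero_mul _, by simp⟩
  have hr' : 0 < ‖r‖ := norm_pos_iff.2 hr
  have hfar : R * ‖r‖ ≤ -⟪r, s⟫ := by
    have := h (-(R / ‖r‖) • r) (by rw [norm_smul, norm_neg, Real.norm_of_nonneg (by positivity),
      div_mul_cancel₀ _ hr'.ne'])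
    rw [inner_sub_right, real_inner_smul_right, real_inner_self_eq_norm_sq] at this
    field_simp at this
    linarith
  have hcs : -⟪r, s⟫ ≤ ‖r‖ * ‖s‖ := by
    rw [← inner_neg_left, ← norm_neg r]; exact real_inner_le_norm _ _
  have hsR : ‖s‖ = R := le_antisymm hs (le_of_mul_le_mul_left (by linarith) hr')
  have halign : ⟪-r, s⟫ = ‖-r‖ * ‖s‖ := by
    rw [hsR] at hcs
    rw [inner_neg_left, norm_neg, hsR]; linarith [mul_comm R ‖r‖]
  rw [inner_eq_norm_mul_iff_real, hsR, norm_neg] at halign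
  refine ⟨‖r‖ / R, by positivity, by rw [hsR, sub_self, mul_zero], ?_⟩
  apply smul_right_injective E hR.ne'
  simp only [smul_neg, smul_smul, mul_div_cancel₀ _ hR.ne']
  rw [← halign, smul_neg, neg_neg]

theorem inner_apply_self_nonneg_of_eventually {B : E →L[ℝ] E} {s : E}
    (h : ∀ᶠ w in 𝓝 s, 0 ≤ ⟪B (w - s), w - s⟫) (u : E) : 0 ≤ ⟪B u, u⟫ := by
  have hline : Tendsto (fun t : ℝ => s + t • u) (𝓝[>] 0) (𝓝 s) :=
    ((by fun_prop : Continuous fun t : ℝ => s + t • u).tendsto' 0 _ (by simp)).mono_left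
      nhdsWithin_le_nhds
  obtain ⟨t, ht, ht0⟩ := ((hline.eventually h).and self_mem_nhdsWithin).exists
  rw [add_sub_cancel_left, map_smul, real_inner_smul_left, real_inner_smul_right,
    ← mul_assoc] at ht
  exact nonneg_of_mul_nonneg_right ht (mul_pos ht0 ht0)

theorem inner_apply_self_nonneg_of_forall_norm_eq {B : E →L[ℝ] E} {s : E} (hs : s ≠ 0)
    (h : ∀ w : E, ‖w‖ = ‖s‖ → 0 ≤ ⟪B (w - s), w - s⟫) (u : E) : 0 ≤ ⟪B u, u⟫ := by
  have hreflect : ∀ u : E, ⟪s, u⟫ ≠ 0 → 0 ≤ ⟪B u, u⟫ := by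
    intro u hsu
    have hu : u ≠ 0 := by rintro rfl; simp at hsu
    have hu' : 0 < ‖u‖ := norm_pos_iff.2 hu
    set t := -2 * ⟪s, u⟫ / ‖u‖ ^ 2
    have htu : t * ‖u‖ ^ 2 = -2 * ⟪s, u⟫ := div_mul_cancel₀ _ (by positivity)
    have ht : t ≠ 0 := div_ne_zero (mul_ne_zero (by norm_num) hsu) (by positivity)
    have hnorm : ‖s + t • u‖ = ‖s‖ := by
      rw [← sq_eq_sq₀ (norm_nonneg _) (norm_nonneg _), norm_add_sq_real, real_inner_smul_right,
        norm_smul, mul_pow, Real.norm_eq_abs, sq_abs]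
      linear_combination t * htu
    have := h _ hnorm
    rw [add_sub_cancel_left, map_smul, real_inner_smul_left, real_inner_smul_right,
      ← mul_assoc] at this
    exact nonneg_of_mul_nonneg_right this (mul_self_pos.2 ht)
  wlog hsu : 0 ≤ ⟪s, u⟫ generalizing u
  · simpa using this (-u) (by rw [inner_neg_right]; linarith)
  have hlim : Tendsto (fun ε : ℝ => ⟪B (u + ε • s), u + ε • s⟫) (𝓝[>] 0) (𝓝 ⟪B u, u⟫) :=
    ((by fun_prop : Continuous fun ε : ℝ => ⟪B (u + ε • s), u + ε • s⟫).tendsto' 0 _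
      (by simp)).mono_left nhdsWithin_le_nhds
  refine ge_of_tendsto hlim (eventually_nhdsWithin_of_forall fun ε hε => hreflect _ ?_)
  have : 0 < ε * ‖s‖ ^ 2 := mul_pos hε (by positivity)
  rw [inner_add_right, real_inner_smul_right, real_inner_self_eq_norm_sq]
  linarith

theorem isMinOn_closedBall_iff (hA : (A : E →ₗ[ℝ] E).IsSymmetric) {R : ℝ} (hR : 0 < R)
    {s : E} :
    (s ∈ closedBall 0 R ∧ IsMinOn (quadraticModel A g) (closedBall 0 R) s) ↔
      ∃ lam : ℝ, 0 ≤ lam ∧ ‖s‖ ≤ R ∧ lam * (‖s‖ - R) = 0 ∧ (A + lam • 1) s = -g ∧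
        ∀ v : E, 0 ≤ ⟪(A + lam • 1) v, v⟫ := by
  constructor
  · rintro ⟨hs, hball⟩
    rw [mem_closedBall_zero_iff] at hs
    obtain ⟨lam, hlam, hcompl, hgrad⟩ := exists_eq_neg_smul_of_forall_inner_sub_nonneg hR hs
      fun w hw => inner_gradient_nonneg_of_isMinOn hA (convex_closedBall 0 R)
        (mem_closedBall_zero_iff.2 hs) (mem_closedBall_zero_iff.2 hw) hball
    have hstat : (A + lam • 1) s = -g := by
      simp only [add_apply, smul_apply, one_apply_eq_self]
      linear_combination (norm := module) hgrad
    have hgap := quadraticModel_sub_of_shifted_stationary hA hstat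
    refine ⟨lam, hlam, hs, hcompl, hstat, ?_⟩
    rcases hs.lt_or_eq with hlt | heq
    · have hlam0 : lam = 0 := (mul_eq_zero.1 hcompl).resolve_right (sub_ne_zero.2 hlt.ne)
      subst hlam0
      refine inner_apply_self_nonneg_of_eventually (s := s) ?_
      filter_upwards [hball.isLocalMin (closedBall_mem_nhds_of_mem (mem_ball_zero_iff.2 hlt))]
        with w hw
      linarith [hgap w]
    · have hs0 : s ≠ 0 := by
        rintro rfl
        exact hR.ne (by simpa using heq)
      refine inner_apply_self_nonneg_of_forall_norm_eq hs0 fun w hw => ?_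
      have hgap_w := hgap w
      rw [hw, sub_self, mul_zero, sub_zero] at hgap_w
      linarith [isMinOn_iff.1 hball w (mem_closedBall_zero_iff.2 (hw.trans heq).le)]
  · rintro ⟨lam, hlam, hs, hcompl, hstat, hpsd⟩
    refine ⟨mem_closedBall_zero_iff.2 hs, isMinOn_iff.2 fun w hw => ?_⟩
    rw [mem_closedBall_zero_iff] at hw
    have hshift : lam * (‖w‖ ^ 2 - ‖s‖ ^ 2) ≤ 0 := by
      rcases mul_eq_zero.1 hcompl with rfl | hsR
      · simp
      · rw [sub_eq_zero.1 hsR]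
        exact mul_nonpos_of_nonneg_of_nonpos hlam
          (sub_nonpos.2 (pow_le_pow_left₀ (norm_nonneg w) hw 2))
    linarith [quadraticModel_sub_of_shifted_stationary hA hstat w, hpsd (w - s)]

end TrustRegion

theorem statement4_general {n : ℕ} (H : En n →L[ℝ] En n) (hH : IsSelfAdjoint H)
    (g : En n) (σ R : ℝ) (hR : 0 < R) (s : En n) :
    (‖s‖ ≤ R ∧ ∀ s' : En n, ‖s'‖ ≤ R →
        ⟪g, s⟫ + 1 / 2 * ⟪(H + (σ * Real.sqrt ‖g‖) • (1 : En n →L[ℝ] En n)) s, s⟫ ≤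
          ⟪g, s'⟫ + 1 / 2 * ⟪(H + (σ * Real.sqrt ‖g‖) • (1 : En n →L[ℝ] En n)) s', s'⟫) ↔
      (∃ lam : ℝ, 0 ≤ lam ∧
        ‖s‖ ≤ R ∧
        lam * (‖s‖ - R) = 0 ∧
        (H + (σ * Real.sqrt ‖g‖) • (1 : En n →L[ℝ] En n) + lam • 1) s = -g ∧
        ∀ v : En n,
          0 ≤ ⟪(H + (σ * Real.sqrt ‖g‖) • (1 : En n →L[ℝ] En n) + lam • 1) v, v⟫) := by
  have hA : ((H + (σ * Real.sqrt ‖g‖) • 1 : En n →L[ℝ] En n) : En n →ₗ[ℝ] En n).IsSymmetric :=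
    (hH.add ((IsSelfAdjoint.all _).smul (IsSelfAdjoint.one _))).isSymmetric
  simpa only [isMinOn_iff, mem_closedBall_zero_iff, TrustRegion.quadraticModel] using
    TrustRegion.isMinOn_closedBall_iff (g := g) (s := s) hA hR

/-- `s` is a global minimizer of the trust-region subproblem
`min_{‖s‖ ≤ R} gᵀs + ½ sᵀ(H + σ‖g‖^{1/2} I)s` iff there is a dual multiplier `λ ≥ 0` with
(i) `‖s‖ ≤ R`, (ii) `λ(‖s‖ − R) = 0`, (iii) `(H + σ‖g‖^{1/2}I + λI)s = −g`, and
(iv) `H + σ‖g‖^{1/2}I + λI ⪰ 0`. -/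
theorem statement4 {n : ℕ} (H : En n →L[ℝ] En n) (hH : IsSelfAdjoint H)
    (g : En n) (σ R : ℝ) (hσ : 0 ≤ σ) (hR : 0 < R) (s : En n) :
    (‖s‖ ≤ R ∧ ∀ s' : En n, ‖s'‖ ≤ R →
        ⟪g, s⟫ + 1 / 2 * ⟪(H + (σ * Real.sqrt ‖g‖) • (1 : En n →L[ℝ] En n)) s, s⟫ ≤
          ⟪g, s'⟫ + 1 / 2 * ⟪(H + (σ * Real.sqrt ‖g‖) • (1 : En n →L[ℝ] En n)) s', s'⟫) ↔
      (∃ lam : ℝ, 0 ≤ lam ∧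
        ‖s‖ ≤ R ∧
        lam * (‖s‖ - R) = 0 ∧
        (H + (σ * Real.sqrt ‖g‖) • (1 : En n →L[ℝ] En n) + lam • 1) s = -g ∧
        ∀ v : En n,
          0 ≤ ⟪(H + (σ * Real.sqrt ‖g‖) • (1 : En n →L[ℝ] En n) + lam • 1) v, v⟫) :=
  statement4_general H hH g σ R hR s
end
end
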